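/- The function g₂(m) := (Γ(m/2)/Γ((m+1)/2)) · (m+1)^{(m+1)/2} / m^{m/2} is strictly decreasing on (0, ∞); that is, for all real numbers 0 < m < m′, g₂(m′) < g₂(m). -/

import Mathlib

open Real Filter Finset Topology

/-- Auxiliary function `W(x) = (x+1/2)·log(x+1/2) − x·log x`. -/
noncomputable def Wf (x : ℝ) : ℝ := (x + 1/2) * Real.log (x + 1/2) - x * Real.log x

/-- Auxiliary function `Ψ(x) = log(x+1/2) − log x + W(x) − W(x+1)`. -/
noncomputable def PsiF (x : ℝ) : ℝ :=
  Real.log (x + 1/2) - Real.log x + Wf x - Wf (x + 1)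

lemma hasDerivAt_xlogx {x c : ℝ} (h : x + c ≠ 0) :
    HasDerivAt (fun y : ℝ => (y + c) * Real.log (y + c)) (Real.log (x + c) + 1) x := by
  have hid : HasDerivAt (fun y : ℝ => y + c) 1 x := (hasDerivAt_id x).add_const c
  have := (Real.hasDerivAt_mul_log h).comp x hid
  simpa [Function.comp_def] using this

lemma hasDerivAt_logshift {x c : ℝ} (h : x + c ≠ 0) :
    HasDerivAt (fun y : ℝ => Real.log (y + c)) ((x + c)⁻¹) x := by
  have hid : HasDerivAt (fun y : ℝ => y + c) 1 x := (hasDerivAt_id x).add_const c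
  have := (Real.hasDerivAt_log h).comp x hid
  simpa [Function.comp_def] using this

lemma hasDerivAt_PsiF {x : ℝ} (hx : 0 < x) :
    HasDerivAt PsiF ((x + 1/2)⁻¹ - x⁻¹ + (Real.log (x + 1/2) - Real.log x
      - Real.log (x + 3/2) + Real.log (x + 1))) x := by
  have h0 : x ≠ 0 := hx.ne'
  have h1 : x + 1/2 ≠ 0 := by positivity
  have h2 : x + 1 ≠ 0 := by positivity
  have h3 : x + (1 + 1/2) ≠ 0 := by positivity
  have H : HasDerivAt (fun y : ℝ => Real.log (y + 1/2) - Real.log y +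
      ((y + 1/2) * Real.log (y + 1/2) - y * Real.log y) -
      ((y + (1 + 1/2)) * Real.log (y + (1 + 1/2)) - (y + 1) * Real.log (y + 1)))
      ((x + 1/2)⁻¹ - x⁻¹ + ((Real.log (x + 1/2) + 1) - (Real.log x + 1)) -
        ((Real.log (x + (1 + 1/2)) + 1) - (Real.log (x + 1) + 1))) x := by
    exact (((hasDerivAt_logshift h1).sub (Real.hasDerivAt_log h0)).add
      ((hasDerivAt_xlogx h1).sub (by simpa using Real.hasDerivAt_mul_log h0))).sub
      ((hasDerivAt_xlogx h3).sub (hasDerivAt_xlogx h2))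
  have heq : (fun y : ℝ => Real.log (y + 1/2) - Real.log y +
      ((y + 1/2) * Real.log (y + 1/2) - y * Real.log y) -
      ((y + (1 + 1/2)) * Real.log (y + (1 + 1/2)) - (y + 1) * Real.log (y + 1))) = PsiF := by
    funext y
    have : y + (1 + 1/2) = y + 1 + 1/2 := by ring
    simp only [PsiF, Wf, this]
  rw [heq] at H
  have : x + (1 + 1/2) = x + 3/2 := by ring
  rw [this] at H
  convert H using 1
  ring

lemma deriv_PsiF_neg {x : ℝ} (hx : 0 < x) : deriv PsiF x < 0 := by
  rw [(hasDerivAt_PsiF hx).deriv]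
  have h1 : (0:ℝ) < x + 1/2 := by linarith
  have h2 : (0:ℝ) < x + 1 := by linarith
  have h3 : (0:ℝ) < x + 3/2 := by linarith
  have hlog : Real.log (x + 1/2) - Real.log x - Real.log (x + 3/2) + Real.log (x + 1)
      = Real.log (((x + 1/2) * (x + 1)) / (x * (x + 3/2))) := by
    rw [Real.log_div (by positivity) (by positivity),
      Real.log_mul h1.ne' h2.ne', Real.log_mul hx.ne' h3.ne']
    ring
  rw [hlog]
  have hy : Real.log (((x + 1/2) * (x + 1)) / (x * (x + 3/2)))
      ≤ ((x + 1/2) * (x + 1)) / (x * (x + 3/2)) - 1 :=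
    Real.log_le_sub_one_of_pos (by positivity)
  have e1 : ((x + 1/2) * (x + 1)) / (x * (x + 3/2)) - 1 = (1/2) / (x * (x + 3/2)) := by
    have hx0 : x ≠ 0 := hx.ne'
    have h30 : x + 3/2 ≠ 0 := h3.ne'
    field_simp <;> ring
  have e2 : (x + 1/2)⁻¹ - x⁻¹ = -((1/2) / (x * (x + 1/2))) := by
    have hx0 : x ≠ 0 := hx.ne'
    have h10 : x + 1/2 ≠ 0 := h1.ne'
    field_simp <;> ring
  have hcmp : (1/2) / (x * (x + 3/2)) < (1/2) / (x * (x + 1/2)) := by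
    apply div_lt_div_of_pos_left (by norm_num) (by positivity)
    nlinarith
  rw [e2]
  rw [e1] at hy
  linarith

lemma strictAntiOn_PsiF : StrictAntiOn PsiF (Set.Ioi 0) := by
  apply strictAntiOn_of_deriv_neg (convex_Ioi 0)
  · intro x hx
    exact (hasDerivAt_PsiF hx).continuousAt.continuousWithinAt
  · intro x hx
    rw [interior_Ioi] at hx
    exact deriv_PsiF_neg hx

lemma Wf_lower {x : ℝ} (hx : 0 < x) : x / (2*x + 1) + (1/2) * Real.log (x + 1/2) ≤ Wf x := by
  have h1 : (0:ℝ) < x + 1/2 := by linarith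
  have ht : (0:ℝ) < (x + 1/2) / x := by positivity
  have hlow : 1 - ((x + 1/2) / x)⁻¹ ≤ Real.log ((x + 1/2) / x) :=
    Real.one_sub_inv_le_log_of_pos ht
  have hd : Real.log ((x + 1/2) / x) = Real.log (x + 1/2) - Real.log x :=
    Real.log_div h1.ne' hx.ne'
  have e : 1 - ((x + 1/2) / x)⁻¹ = (1/2) / (x + 1/2) := by
    have hx0 : x ≠ 0 := hx.ne'
    have h10 : x + 1/2 ≠ 0 := h1.ne'
    field_simp <;> ring
  rw [hd, e] at hlow
  have hx' : x * ((1/2) / (x + 1/2)) ≤ x * (Real.log (x + 1/2) - Real.log x) :=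
    mul_le_mul_of_nonneg_left hlow hx.le
  have e2 : x * ((1/2) / (x + 1/2)) = x / (2*x + 1) := by
    rw [mul_div_assoc', div_eq_div_iff (by positivity) (by positivity)]
    ring
  have e3 : Wf x = x * (Real.log (x + 1/2) - Real.log x) + (1/2) * Real.log (x + 1/2) := by
    simp only [Wf]; ring
  rw [e3]
  rw [e2] at hx'
  linarith

lemma Wf_upper {x : ℝ} (hx : 0 < x) : Wf x ≤ 1/2 + (1/2) * Real.log (x + 1/2) := by
  have h1 : (0:ℝ) < x + 1/2 := by linarith
  have ht : (0:ℝ) < (x + 1/2) / x := by positivity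
  have hup : Real.log ((x + 1/2) / x) ≤ (x + 1/2) / x - 1 := Real.log_le_sub_one_of_pos ht
  have hd : Real.log ((x + 1/2) / x) = Real.log (x + 1/2) - Real.log x :=
    Real.log_div h1.ne' hx.ne'
  have e : (x + 1/2) / x - 1 = (1/2) / x := by
    have hx0 : x ≠ 0 := hx.ne'
    field_simp <;> ring
  rw [hd, e] at hup
  have hx' : x * (Real.log (x + 1/2) - Real.log x) ≤ x * ((1/2) / x) :=
    mul_le_mul_of_nonneg_left hup hx.le
  have e2 : x * ((1/2) / x) = 1/2 := by
    have hx0 : x ≠ 0 := hx.ne'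
    field_simp
  have e3 : Wf x = x * (Real.log (x + 1/2) - Real.log x) + (1/2) * Real.log (x + 1/2) := by
    simp only [Wf]; ring
  rw [e3]
  rw [e2] at hx'
  linarith

/-- Two-sided bound on `W(x+δ) − W(x)`. -/
lemma Wf_diff_bound {x δ : ℝ} (hx : 0 < x) (hδ : 0 ≤ δ) :
    |Wf (x + δ) - Wf x| ≤ (1/2 + δ/2) / x := by
  have hxδ : 0 < x + δ := by linarith
  have h1 : (0:ℝ) < x + 1/2 := by linarith
  have h2 : (0:ℝ) < x + δ + 1/2 := by linarith
  have hu := Wf_upper hxδ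
  have hl := Wf_lower hx
  have hu' := Wf_upper hx
  have hl' := Wf_lower hxδ
  have hratio : Real.log (x + δ + 1/2) - Real.log (x + 1/2) ≤ δ / (x + 1/2) := by
    have ht : (0:ℝ) < (x + δ + 1/2) / (x + 1/2) := by positivity
    have hlog := Real.log_le_sub_one_of_pos ht
    rw [Real.log_div h2.ne' h1.ne'] at hlog
    have e : (x + δ + 1/2) / (x + 1/2) - 1 = δ / (x + 1/2) := by
      have h10 : x + 1/2 ≠ 0 := h1.ne'
      field_simp <;> ring
    linarith [e ▸ hlog]
  have hratio0 : 0 ≤ Real.log (x + δ + 1/2) - Real.log (x + 1/2) := by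
    have := Real.log_le_log h1 (by linarith : x + 1/2 ≤ x + δ + 1/2)
    linarith
  have gap1 : x / (2*x + 1) + (1/2) / (2*x + 1) = 1/2 := by
    rw [← add_div, div_eq_div_iff (by positivity) (by positivity)]; ring
  have gap2 : (x + δ) / (2*(x + δ) + 1) + (1/2) / (2*(x + δ) + 1) = 1/2 := by
    rw [← add_div, div_eq_div_iff (by positivity) (by positivity)]; ring
  have esum : (1/2 + δ/2) / x = (1/2) / x + (δ/2) / x := add_div _ _ _
  have b1 : (1/2 : ℝ) / (2*x + 1) ≤ (1/2) / x :=
    div_le_div_of_nonneg_left (by norm_num) hx (by linarith)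
  have b2 : (1/2 : ℝ) / (2*(x + δ) + 1) ≤ (1/2) / x :=
    div_le_div_of_nonneg_left (by norm_num) hx (by linarith)
  have b3 : (1/2) * (δ / (x + 1/2)) ≤ (δ/2) / x := by
    have e : (1/2) * (δ / (x + 1/2)) = (δ/2) / (x + 1/2) := by
      rw [mul_div_assoc']
      ring_nf
    rw [e]
    exact div_le_div_of_nonneg_left (by linarith) hx (by linarith)
  have hd2 : (0:ℝ) ≤ (δ/2) / x := by positivity
  rw [abs_le]
  constructor
  · nlinarith [hl', hu', hratio0, gap2, b2]
  · nlinarith [hu, hl, hratio, gap1, b1, b3]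

/-- `log` of the real Gamma sequence. -/
lemma log_GammaSeq {s : ℝ} (hs : 0 < s) {n : ℕ} (hn : 1 ≤ n) :
    Real.log (Real.GammaSeq s n) = s * Real.log n + Real.log (Nat.factorial n)
      - ∑ j ∈ Finset.range (n + 1), Real.log (s + j) := by
  have hn0 : (0:ℝ) < (n : ℝ) := by exact_mod_cast hn
  have hprod : (0:ℝ) < ∏ j ∈ Finset.range (n + 1), (s + j) := by
    apply Finset.prod_pos
    intro j _
    positivity
  have hfact : (0:ℝ) < (Nat.factorial n : ℝ) := by exact_mod_cast n.factorial_pos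
  have hne : ∀ j ∈ Finset.range (n + 1), s + (j:ℝ) ≠ 0 := by
    intro j _
    positivity
  rw [Real.GammaSeq, Real.log_div (by positivity) hprod.ne',
    Real.log_mul (by positivity) hfact.ne', Real.log_rpow hn0,
    Real.log_prod hne]

/-- Strict inequality for the function `F(a) = log Γ(a) − log Γ(a+1/2) + W(a)`. -/
lemma F_strictAnti {a a' : ℝ} (ha : 0 < a) (haa : a < a') :
    Real.log (Real.Gamma a') - Real.log (Real.Gamma (a' + 1/2)) + Wf a'
      < Real.log (Real.Gamma a) - Real.log (Real.Gamma (a + 1/2)) + Wf a := by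
  have ha' : 0 < a' := ha.trans haa
  set b := a + 1/2 with hb
  set b' := a' + 1/2 with hb'
  have hbpos : 0 < b := by simp only [hb]; linarith
  have hb'pos : 0 < b' := by simp only [hb']; linarith
  -- the partial sums
  set S : ℕ → ℝ := fun n => ∑ j ∈ Finset.range (n + 1), (PsiF (a + j) - PsiF (a' + j)) with hS
  -- each term is positive
  have hterm : ∀ j : ℕ, 0 < PsiF (a + j) - PsiF (a' + j) := by
    intro j
    have hj : (0:ℝ) ≤ (j:ℝ) := Nat.cast_nonneg j
    have h1 : (0:ℝ) < a + j := by linarith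
    have h2 : (0:ℝ) < a' + j := by linarith
    have := strictAntiOn_PsiF (Set.mem_Ioi.mpr h1) (Set.mem_Ioi.mpr h2) (by linarith)
    linarith
  -- S is monotone
  have hmono : Monotone S := by
    apply monotone_nat_of_le_succ
    intro n
    simp only [hS]
    rw [Finset.sum_range_succ (fun j : ℕ => PsiF (a + j) - PsiF (a' + j)) (n + 1)]
    have h := hterm (n + 1)
    push_cast at h ⊢
    linarith
  have hS0 : 0 < S 0 := by
    have h := hterm 0
    simp only [hS, zero_add, Finset.sum_range_one]
    exact h
  -- the limit of S
  set L : ℝ := (Real.log (Real.Gamma a) - Real.log (Real.Gamma b))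
      - (Real.log (Real.Gamma a') - Real.log (Real.Gamma b')) with hLdef
  -- combination of log GammaSeq tends to L
  have hGS : Tendsto (fun n : ℕ => (Real.log (Real.GammaSeq a n) - Real.log (Real.GammaSeq b n))
      - (Real.log (Real.GammaSeq a' n) - Real.log (Real.GammaSeq b' n))) atTop (𝓝 L) := by
    have t1 := (Real.GammaSeq_tendsto_Gamma a).log (Real.Gamma_pos_of_pos ha).ne'
    have t2 := (Real.GammaSeq_tendsto_Gamma b).log (Real.Gamma_pos_of_pos hbpos).ne'
    have t3 := (Real.GammaSeq_tendsto_Gamma a').log (Real.Gamma_pos_of_pos ha').ne'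
    have t4 := (Real.GammaSeq_tendsto_Gamma b').log (Real.Gamma_pos_of_pos hb'pos).ne'
    exact (t1.sub t2).sub (t3.sub t4)
  -- identify S with the log GammaSeq combination plus correction terms
  have hSeq : ∀ n : ℕ, 1 ≤ n → S n =
      ((Real.log (Real.GammaSeq a n) - Real.log (Real.GammaSeq b n))
      - (Real.log (Real.GammaSeq a' n) - Real.log (Real.GammaSeq b' n)))
      + (Wf a - Wf a') + (Wf (a' + (n + 1 : ℕ)) - Wf (a + (n + 1 : ℕ))) := by
    intro n hn
    have e1 : S n = (∑ j ∈ Finset.range (n + 1),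
        ((Real.log (b + j) - Real.log (a + j)) - (Real.log (b' + j) - Real.log (a' + j))))
        + (∑ j ∈ Finset.range (n + 1), (Wf (a + j) - Wf (a + j + 1)))
        - (∑ j ∈ Finset.range (n + 1), (Wf (a' + j) - Wf (a' + j + 1))) := by
      simp only [hS]
      rw [← Finset.sum_add_distrib, ← Finset.sum_sub_distrib]
      apply Finset.sum_congr rfl
      intro j _
      simp only [PsiF, hb, hb']
      ring_nf
    have tel : ∀ c : ℝ, (∑ j ∈ Finset.range (n + 1), (Wf (c + j) - Wf (c + j + 1)))
        = Wf c - Wf (c + (n + 1 : ℕ)) := by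
      intro c
      have h2 : ∀ j ∈ Finset.range (n + 1), Wf (c + (j:ℝ)) - Wf (c + (j:ℝ) + 1)
          = (fun j : ℕ => Wf (c + j)) j - (fun j : ℕ => Wf (c + j)) (j + 1) := by
        intro j _
        simp only
        push_cast
        ring_nf
      rw [Finset.sum_congr rfl h2, Finset.sum_range_sub' (fun j : ℕ => Wf (c + j)) (n + 1)]
      push_cast
      ring_nf
    have tel1 := tel a
    have tel2 := tel a'
    have e2 : (∑ j ∈ Finset.range (n + 1),
        ((Real.log (b + j) - Real.log (a + j)) - (Real.log (b' + j) - Real.log (a' + j))))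
        = (Real.log (Real.GammaSeq a n) - Real.log (Real.GammaSeq b n))
          - (Real.log (Real.GammaSeq a' n) - Real.log (Real.GammaSeq b' n)) := by
      rw [log_GammaSeq ha hn, log_GammaSeq hbpos hn, log_GammaSeq ha' hn,
        log_GammaSeq hb'pos hn]
      have expand : (∑ j ∈ Finset.range (n + 1),
          ((Real.log (b + j) - Real.log (a + j)) - (Real.log (b' + j) - Real.log (a' + j))))
          = (∑ j ∈ Finset.range (n + 1), Real.log (b + j))
            - (∑ j ∈ Finset.range (n + 1), Real.log (a + j))
            - ((∑ j ∈ Finset.range (n + 1), Real.log (b' + j))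
            - (∑ j ∈ Finset.range (n + 1), Real.log (a' + j))) := by
        rw [← Finset.sum_sub_distrib, ← Finset.sum_sub_distrib, ← Finset.sum_sub_distrib]
      rw [expand]
      ring_nf
      rw [hb, hb']
      ring
    rw [e1, tel1, tel2, e2]
    ring
  -- the tail tends to zero
  have htail : Tendsto (fun n : ℕ => Wf (a' + (n + 1 : ℕ)) - Wf (a + (n + 1 : ℕ)))
      atTop (𝓝 0) := by
    set C : ℝ := 1/2 + (a' - a)/2 with hC
    have hbound : ∀ n : ℕ, |Wf (a' + (n + 1 : ℕ)) - Wf (a + (n + 1 : ℕ))| ≤ C / (a + (n + 1 : ℕ)) := by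
      intro n
      have hxpos : (0:ℝ) < a + (n + 1 : ℕ) := by
        have : (0:ℝ) ≤ ((n + 1 : ℕ) : ℝ) := Nat.cast_nonneg _
        linarith
      have hδ : (0:ℝ) ≤ a' - a := by linarith
      have := Wf_diff_bound hxpos hδ
      have e : a + (n + 1 : ℕ) + (a' - a) = a' + (n + 1 : ℕ) := by ring
      rw [e] at this
      exact this
    have hCpos : 0 ≤ C := by simp only [hC]; linarith
    have hto : Tendsto (fun n : ℕ => C / (a + (n + 1 : ℕ))) atTop (𝓝 0) := by
      have h1 : Tendsto (fun n : ℕ => a + ((n + 1 : ℕ) : ℝ)) atTop atTop := by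
        apply tendsto_atTop_add_const_left
        have h2 : Tendsto (fun n : ℕ => ((n:ℝ) + 1)) atTop atTop :=
          tendsto_atTop_add_const_right _ 1 (tendsto_natCast_atTop_atTop (R := ℝ))
        exact_mod_cast h2
      simpa [div_eq_mul_inv] using h1.inv_tendsto_atTop.const_mul C
    apply squeeze_zero_norm _ hto
    intro n
    rw [Real.norm_eq_abs]
    exact hbound n
  -- compute the limit of S
  have hStendsto : Tendsto S atTop (𝓝 (L + (Wf a - Wf a'))) := by
    have hcomb : Tendsto (fun n : ℕ =>
        ((Real.log (Real.GammaSeq a n) - Real.log (Real.GammaSeq b n))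
        - (Real.log (Real.GammaSeq a' n) - Real.log (Real.GammaSeq b' n)))
        + (Wf a - Wf a') + (Wf (a' + (n + 1 : ℕ)) - Wf (a + (n + 1 : ℕ))))
        atTop (𝓝 (L + (Wf a - Wf a') + 0)) :=
      ((hGS.add tendsto_const_nhds).add htail)
    rw [add_zero] at hcomb
    apply hcomb.congr'
    filter_upwards [eventually_ge_atTop 1] with n hn
    exact (hSeq n hn).symm
  -- conclude
  have hle : S 0 ≤ L + (Wf a - Wf a') := by
    apply ge_of_tendsto hStendsto
    filter_upwards with n
    exact hmono (Nat.zero_le n)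
  have : 0 < L + (Wf a - Wf a') := lt_of_lt_of_le hS0 hle
  simp only [hLdef] at this
  linarith

/-- The statement's expression equals `exp (F(m/2) + (log 2)/2)`. -/
lemma g2_eq {m : ℝ} (hm : 0 < m) :
    Real.Gamma (m / 2) / Real.Gamma ((m + 1) / 2) * (m + 1) ^ ((m + 1) / 2) / m ^ (m / 2)
      = Real.exp ((Real.log (Real.Gamma (m/2)) - Real.log (Real.Gamma (m/2 + 1/2)) + Wf (m/2))
          + (1/2) * Real.log 2) := by
  have hm1 : (0:ℝ) < m + 1 := by linarith
  have hg1 : 0 < Real.Gamma (m / 2) := Real.Gamma_pos_of_pos (by linarith)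
  have hg2 : 0 < Real.Gamma ((m + 1) / 2) := Real.Gamma_pos_of_pos (by linarith)
  have hr1 : (0:ℝ) < (m + 1) ^ ((m + 1) / 2) := Real.rpow_pos_of_pos hm1 _
  have hr2 : (0:ℝ) < m ^ (m / 2) := Real.rpow_pos_of_pos hm _
  have hpos : 0 < Real.Gamma (m / 2) / Real.Gamma ((m + 1) / 2)
      * (m + 1) ^ ((m + 1) / 2) / m ^ (m / 2) := by positivity
  rw [← Real.exp_log hpos]
  congr 1
  rw [Real.log_div (by positivity) hr2.ne', Real.log_mul (by positivity) hr1.ne',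
    Real.log_div hg1.ne' hg2.ne', Real.log_rpow hm1, Real.log_rpow hm]
  have e1 : m/2 + 1/2 = (m + 1)/2 := by ring
  rw [e1]
  simp only [Wf]
  have e2 : m/2 + 1/2 = (m + 1)/2 := by ring
  rw [e2]
  have l1 : Real.log ((m + 1)/2) = Real.log (m + 1) - Real.log 2 :=
    Real.log_div hm1.ne' (by norm_num)
  have l2 : Real.log (m/2) = Real.log m - Real.log 2 :=
    Real.log_div hm.ne' (by norm_num)
  rw [l1, l2]
  ring

/-- the function
`g₂(m) = (Γ(m/2)/Γ((m+1)/2)) · (m+1)^{(m+1)/2} / m^{m/2}` is strictly decreasing on `(0, ∞)`. -/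
theorem stmt_9 :
    ∀ m m' : ℝ, 0 < m → m < m' →
      Real.Gamma (m' / 2) / Real.Gamma ((m' + 1) / 2) * (m' + 1) ^ ((m' + 1) / 2) / m' ^ (m' / 2)
        < Real.Gamma (m / 2) / Real.Gamma ((m + 1) / 2) * (m + 1) ^ ((m + 1) / 2) / m ^ (m / 2) := by
  intro m m' hm hmm'
  have hm' : 0 < m' := hm.trans hmm'
  rw [g2_eq hm, g2_eq hm']
  apply Real.exp_lt_exp.mpr
  have := F_strictAnti (by linarith : 0 < m/2) (by linarith : m/2 < m'/2)
  linarith
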